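/- Let (R, m, k) be a local (G_1) and (S_2) F-finite and F-pure ring of prime characteristic p > 0. If D is a torsion divisor of index p^e, Cartier in codimension 1, then the divisorial ideal R(D) is a direct summand of F^e_* R as an R-module. -/

import Mathlib

open CategoryTheory TensorProduct Polynomial

attribute [local instance] Algebra.TensorProduct.rightAlgebra

universe u

noncomputable section

/-! ### Purity, F-purity, F-finiteness, Frobenius pushforwards -/

/-- A ring homomorphism `f : R →+* S` is *pure* if for every `R`-module `Q`, the base
change map `R ⊗[R] Q → S ⊗[R] Q` (where `S` is an `R`-module via `f`) is injective. -/
def RingHom.IsPureHom {R S : Type u} [CommRing R] [CommRing S] (f : R →+* S) : Prop :=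
  letI : Algebra R S := f.toAlgebra
  ∀ (Q : Type u) [AddCommGroup Q] [Module R Q],
    Function.Injective (LinearMap.rTensor Q (Algebra.linearMap R S))

/-- An `R`-linear map `φ : M → N` is *pure* if `φ ⊗ id_Q` is injective for every
`R`-module `Q`. -/
def LinearMap.IsPureLMap {R : Type u} [CommRing R] {M N : Type u}
    [AddCommGroup M] [Module R M] [AddCommGroup N] [Module R N] (φ : M →ₗ[R] N) : Prop :=
  ∀ (Q : Type u) [AddCommGroup Q] [Module R Q],
    Function.Injective (LinearMap.rTensor Q φ)

/-- `R` of prime characteristic `p > 0` is `F`-pure if the Frobenius endomorphism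
`r ↦ r ^ p` is a pure ring homomorphism. -/
def IsFPure (R : Type u) [CommRing R] (p : ℕ) [ExpChar R p] : Prop :=
  (frobenius R p).IsPureHom

/-- A ring is `F`-pure if it has prime characteristic `p > 0` and the Frobenius
endomorphism is a pure ring homomorphism. -/
def IsFPureRing (A : Type u) [CommRing A] : Prop :=
  ∃ (p : ℕ) (hp : Fact p.Prime) (hc : CharP A p),
    letI := hp; letI := hc; (frobenius A p).IsPureHom

/-- `R` is `F`-finite if the pushforward of `R` along each iterate of the Frobenius
endomorphism is a finitely generated `R`-module. -/
def IsFFinite (R : Type u) [CommRing R] (p : ℕ) [ExpChar R p] : Prop :=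
  ∀ e : ℕ, (iterateFrobenius R p e).Finite

/-- Type synonym for the Frobenius pushforward `F^e_* M` of a module `M`. -/
def FPush (_p _e : ℕ) (M : Type u) : Type u := M

instance (p e : ℕ) (M : Type u) [AddCommGroup M] : AddCommGroup (FPush p e M) :=
  inferInstanceAs (AddCommGroup M)

/-- The `R`-module structure on `F^e_* M`, given by `r • m = r ^ (p ^ e) • m`. -/
instance (R : Type u) [CommRing R] (p : ℕ) [ExpChar R p] (e : ℕ) (M : Type u)
    [AddCommGroup M] [Module R M] : Module R (FPush p e M) :=
  Module.compHom M (iterateFrobenius R p e)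

/-- The identity map of `M`, viewed as a map `M → F^e_* M`. -/
def toFPush (p e : ℕ) {M : Type u} (m : M) : FPush p e M := m

/-- The `R`-linear map `R → F^e_* R` sending `1` to `F^e_* c`. -/
def splittingMap (R : Type u) [CommRing R] (p : ℕ) [ExpChar R p] (e : ℕ) (c : R) :
    R →ₗ[R] FPush p e R where
  toFun r := toFPush p e (c * iterateFrobenius R p e r)
  map_add' x y := by
    show c * iterateFrobenius R p e (x + y) =
      c * iterateFrobenius R p e x + c * iterateFrobenius R p e y
    rw [map_add, mul_add]
  map_smul' r x := by
    show c * iterateFrobenius R p e (r * x) =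
      iterateFrobenius R p e r * (c * iterateFrobenius R p e x)
    rw [map_mul]; ring

/-- The `e`-th Frobenius splitting ideal `I_e(R)`, as a set: those `c ∈ R` such that
the `R`-linear map `R → F^e_* R`, `1 ↦ F^e_* c`, is not pure. -/
def frobeniusSplittingSet (R : Type u) [CommRing R] (p : ℕ) [ExpChar R p] (e : ℕ) :
    Set R :=
  {c : R | ¬ (splittingMap R p e c).IsPureLMap}

/-- `M` is a direct summand of `N` as `R`-modules. -/
def IsDirectSummandOf (R : Type u) [CommRing R] (M N : Type u)
    [AddCommGroup M] [Module R M] [AddCommGroup N] [Module R N] : Prop :=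
  ∃ (ι : M →ₗ[R] N) (π : N →ₗ[R] M), π.comp ι = LinearMap.id

/-! ### Dimension theory, depth, Serre conditions, Gorenstein and Cohen–Macaulay rings -/

/-- The height of an ideal `I`: the infimum over primes `P ⊇ I` of the supremum of the
lengths of chains of primes below `P`. -/
def idealHeight (A : Type u) [CommRing A] (I : Ideal A) : WithBot ℕ∞ :=
  ⨅ (P : PrimeSpectrum A) (_ : I ≤ P.asIdeal),
    Order.krullDim {Q : PrimeSpectrum A // Q.asIdeal ≤ P.asIdeal}

/-- `Ext^i_A(M, N)`, as an `A`-module. -/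
def extMod (A : Type u) [CommRing A] (i : ℕ) (M N : ModuleCat.{u} A) : ModuleCat.{u} A :=
  ((Ext A (ModuleCat.{u} A) i).obj (Opposite.op M)).obj N

/-- A Gorenstein local ring: a Noetherian local ring of finite injective dimension over
itself, i.e. there is `n` such that `Ext^i_A(M, A) = 0` for all `i > n` and all `M`. -/
def IsGorensteinLocalRing (A : Type u) [CommRing A] : Prop :=
  IsNoetherianRing A ∧ IsLocalRing A ∧
    ∃ n : ℕ, ∀ i > n, ∀ M : ModuleCat.{u} A,
      Subsingleton (extMod A i M (ModuleCat.of A A))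

/-- Over a local ring `A`, `depth_A(M) ≥ n` iff `Ext^i_A(k, M) = 0` for all `i < n`,
where `k` is the residue field of `A`. -/
def depthGE (A : Type u) [CommRing A] [IsLocalRing A] (M : ModuleCat.{u} A) (n : ℕ) :
    Prop :=
  ∀ i < n, Subsingleton (extMod A i (ModuleCat.of A (IsLocalRing.ResidueField A)) M)

/-- Serre's condition `(S_2)` for a module `M`: for every prime `P`,
`depth_{A_P}(M_P) ≥ min {2, dim M_P}`. -/
def IsS2Module (A : Type u) [CommRing A] (M : Type u) [AddCommGroup M] [Module A M] :
    Prop :=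
  ∀ (P : Ideal A) [P.IsPrime], ∀ n : ℕ, n ≤ 2 →
    (n : WithBot ℕ∞) ≤ Order.krullDim
      {Q : PrimeSpectrum A //
        (⊤ : Submodule A M).annihilator ≤ Q.asIdeal ∧ Q.asIdeal ≤ P} →
    depthGE (Localization.AtPrime P)
      (ModuleCat.of (Localization.AtPrime P) (LocalizedModule P.primeCompl M)) n

/-- Serre's condition `(S_2)` for a ring. -/
def IsS2Ring (A : Type u) [CommRing A] : Prop := IsS2Module A A

/-- A ring is `(G_1)` if it is Gorenstein in codimension one, i.e. `A_P` is Gorenstein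
for every prime `P` of height at most one. -/
def IsG1 (A : Type u) [CommRing A] : Prop :=
  ∀ (P : Ideal A) [P.IsPrime], idealHeight A P ≤ 1 →
    IsGorensteinLocalRing (Localization.AtPrime P)

/-- A module over a local ring is Cohen–Macaulay if its depth is at least the Krull
dimension of its support. -/
def IsCMModule (A : Type u) [CommRing A] [IsLocalRing A] (M : Type u)
    [AddCommGroup M] [Module A M] : Prop :=
  ∀ n : ℕ, (n : WithBot ℕ∞) ≤ Order.krullDim
      {Q : PrimeSpectrum A // (⊤ : Submodule A M).annihilator ≤ Q.asIdeal} →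
    depthGE A (ModuleCat.of A M) n

/-- A Cohen–Macaulay local ring. -/
def IsCMLocalRing (A : Type u) [CommRing A] : Prop :=
  IsNoetherianRing A ∧ ∃ _ : IsLocalRing A, IsCMModule A A

/-- A regular local ring: a Noetherian local ring whose maximal ideal is generated by
`dim A` elements. -/
def IsRegularLocalRingDef (A : Type u) [CommRing A] : Prop :=
  IsNoetherianRing A ∧ ∃ _ : IsLocalRing A, ∃ s : Finset A,
    Ideal.span (s : Set A) = IsLocalRing.maximalIdeal A ∧
    (s.card : WithBot ℕ∞) = ringKrullDim A

/-- A catenary ring: any two saturated chains of primes with the same endpoints have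
the same length. -/
def IsCatenary (A : Type u) [CommRing A] : Prop :=
  ∀ c₁ c₂ : LTSeries (PrimeSpectrum A),
    c₁.head = c₂.head → c₁.last = c₂.last →
    (∀ i : Fin c₁.length, c₁.toFun i.castSucc ⋖ c₁.toFun i.succ) →
    (∀ i : Fin c₂.length, c₂.toFun i.castSucc ⋖ c₂.toFun i.succ) →
    c₁.length = c₂.length

/-- An equidimensional ring: all minimal primes have quotients of full dimension. -/
def IsEquidimensional (A : Type u) [CommRing A] : Prop :=
  ∀ P ∈ minimalPrimes A, ringKrullDim (A ⧸ P) = ringKrullDim A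

/-- A parameter element of a local ring: a nonunit cutting the dimension down by
exactly one. -/
def IsParamElem (A : Type u) [CommRing A] (x : A) : Prop :=
  ¬ IsUnit x ∧ ringKrullDim (A ⧸ Ideal.span {x}) + 1 = ringKrullDim A

/-- A system of parameters of a local ring, as a list: nonunits, as many as the Krull
dimension, generating an ideal with zero-dimensional quotient. -/
def IsSOP (A : Type u) [CommRing A] (xs : List A) : Prop :=
  (xs.length : WithBot ℕ∞) = ringKrullDim A ∧ (∀ x ∈ xs, ¬ IsUnit x) ∧
    ringKrullDim (A ⧸ Ideal.span {y | y ∈ xs}) ≤ 0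

/-! ### Symbolic powers, unmixed parts, bracket powers -/

/-- The complement of the union of the minimal primes of `I`, as a submonoid. -/
def Ideal.minCompl {A : Type u} [CommRing A] (I : Ideal A) : Submonoid A where
  carrier := {s : A | ∀ P ∈ I.minimalPrimes, s ∉ P}
  one_mem' := by
    intro P hP
    have hprime : P.IsPrime := hP.1.1
    exact (Ideal.ne_top_iff_one P).mp hprime.ne_top
  mul_mem' := by
    intro a b ha hb P hP hab
    have hprime : P.IsPrime := hP.1.1
    rcases hprime.mem_or_mem hab with h | h
    · exact ha P hP h
    · exact hb P hP h

/-- The `N`-th symbolic power of an ideal `I`: the contraction of `I ^ N` from the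
localization at the complement of the union of the minimal primes of `I`. -/
def Ideal.symPow {A : Type u} [CommRing A] (I : Ideal A) (N : ℕ) : Ideal A :=
  ((I ^ N).map (algebraMap A (Localization I.minCompl))).comap
    (algebraMap A (Localization I.minCompl))

/-- The intersection of the minimal primary components of an ideal `a`: the contraction
of `a` from the localization at the complement of the union of its minimal primes. -/
def Ideal.unmixedPart {A : Type u} [CommRing A] (a : Ideal A) : Ideal A :=
  (a.map (algebraMap A (Localization a.minCompl))).comap
    (algebraMap A (Localization a.minCompl))

/-- In characteristic `p > 0`, the bracket power `I^{[q]}`: the ideal generated by the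
`q`-th powers of the elements of `I`. -/
def Ideal.bracketPow {A : Type u} [CommRing A] (I : Ideal A) (q : ℕ) : Ideal A :=
  Ideal.span ((fun r => r ^ q) '' (I : Set A))

/-! ### Canonical modules and canonical ideals -/

/-- A surjection onto `A` from a regular local ring. -/
structure RegularSurjection (A : Type u) [CommRing A] : Type (u + 1) where
  carrier : Type u
  [instRing : CommRing carrier]
  toHom : carrier →+* A
  regular : IsRegularLocalRingDef carrier
  surjective : Function.Surjective toHom

attribute [instance] RegularSurjection.instRing

/-- `M` is a canonical module of `A`: writing `A ≅ S/I` with `S` regular local via a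
surjection `π : S → A`, we have `M ≅ Ext^h_S(A, S)` where `h = ht (ker π)`. -/
def IsCanonicalModule (A : Type u) [CommRing A] (M : Type u) [AddCommGroup M]
    [Module A M] : Prop :=
  ∃ (P : RegularSurjection A) (h : ℕ),
    ((h : ℕ∞) : WithBot ℕ∞) = idealHeight P.carrier (RingHom.ker P.toHom) ∧
    letI : Module P.carrier A := Module.compHom A P.toHom
    letI : Module P.carrier M := Module.compHom M P.toHom
    Nonempty
      ((extMod P.carrier h (ModuleCat.of P.carrier A) (ModuleCat.of P.carrier P.carrier))
        ≃ₗ[P.carrier] M)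

/-- A canonical ideal of `A`: a proper ideal which is a canonical module of `A`. -/
def IsCanonicalIdeal (A : Type u) [CommRing A] (J : Ideal A) : Prop :=
  J ≠ ⊤ ∧ IsCanonicalModule A J

/-- An ideal is Cartier if, Zariski-locally, it is generated by one non-zero-divisor. -/
def IsCartierIdeal (A : Type u) [CommRing A] (I : Ideal A) : Prop :=
  ∀ (P : Ideal A), P.IsPrime →
    ∃ a ∈ I, a ∈ nonZeroDivisors A ∧ ∀ x ∈ I, ∃ r : A, ∃ s ∉ P, s * x = r * a

/-- A module is principal in codimension one: locally cyclic at every prime of height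
at most one. -/
def IsPrincipalInCodimOne (A : Type u) [CommRing A] (M : Type u) [AddCommGroup M]
    [Module A M] : Prop :=
  ∀ (P : Ideal A), P.IsPrime → idealHeight A P ≤ 1 →
    ∃ g : M, ∀ x : M, ∃ r : A, ∃ s ∉ P, s • x = r • g

/-! ### Generalized divisors à la Hartshorne, divisorial ideals and cyclic covers -/

/-- For a submodule `M` of the total quotient ring `L` of `A`, its "dual"
`(A :_L M) = {x ∈ L ∣ x · M ⊆ A}`.  If `M = A(D)` then `(A :_L M) = A(-D)`. -/
def divDual (A : Type u) [CommRing A] (L : Type u) [CommRing L] [Algebra A L]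
    (M : Submodule A L) : Submodule A L where
  carrier := {x : L | ∀ m ∈ M, x * m ∈ (1 : Submodule A L)}
  add_mem' := by
    intro a b ha hb m hm
    rw [add_mul]; exact Submodule.add_mem _ (ha m hm) (hb m hm)
  zero_mem' := by intro m hm; rw [zero_mul]; exact Submodule.zero_mem _
  smul_mem' := by
    intro r x hx m hm
    rw [smul_mul_assoc]; exact Submodule.smul_mem _ r (hx m hm)

/-- The reflexive hull `M^{**} = (A : (A : M))` of a submodule of the total quotient
ring `L` of `A`. -/
def divHull (A : Type u) [CommRing A] (L : Type u) [CommRing L] [Algebra A L]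
    (M : Submodule A L) : Submodule A L := divDual A L (divDual A L M)

/-- For `M = A(D)` the divisorial ideal of a generalized divisor `D` (Cartier in
codimension one), `divPowZ A L M i = A(iD)`: the reflexive hull of `M ^ i` for `i ≥ 0`
and of `(A : M) ^ (-i)` for `i < 0`. -/
def divPowZ (A : Type u) [CommRing A] (L : Type u) [CommRing L] [Algebra A L]
    (M : Submodule A L) : ℤ → Submodule A L
  | Int.ofNat n => divHull A L (M ^ n)
  | Int.negSucc n => divHull A L ((divDual A L M) ^ (n + 1))

/-- A submodule of the total quotient ring is principal generated by a unit; for a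
divisorial ideal `A(D)` this says precisely that `D ∼ 0`. -/
def IsPrincipalUnitSub (A : Type u) [CommRing A] (L : Type u) [CommRing L] [Algebra A L]
    (M : Submodule A L) : Prop :=
  ∃ v : L, IsUnit v ∧ M = Submodule.span A {v}

/-- A divisorial ideal, representing a generalized divisor (Cartier in codimension one)
in the sense of Hartshorne: a reflexive `A`-submodule of the total quotient ring `L`
containing a unit of `L`, which can be cleared into `A` by a non-zero-divisor and which
is principal, generated by a unit, in codimension one. -/
structure IsGenDivisorIdeal (A : Type u) [CommRing A] (L : Type u) [CommRing L]
    [Algebra A L] (M : Submodule A L) : Prop where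
  fractional : ∃ r : A, r ∈ nonZeroDivisors A ∧
    ∀ m ∈ M, algebraMap A L r * m ∈ (1 : Submodule A L)
  exists_unit : ∃ v : L, IsUnit v ∧ v ∈ M
  reflexive : divHull A L M = M
  locallyPrincipal : ∀ (P : Ideal A), P.IsPrime → idealHeight A P ≤ 1 →
    ∃ v : L, IsUnit v ∧ v ∈ M ∧ ∀ m ∈ M, ∃ r : A, ∃ s ∉ P, s • m = r • v

/-- The index of a torsion divisor represented by its divisorial ideal `M`: the least
`k ≥ 1` such that `kD` is principal, generated by a unit of `L`. -/
def divisorIndex (A : Type u) [CommRing A] (L : Type u) [CommRing L] [Algebra A L]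
    (M : Submodule A L) : ℕ :=
  sInf {k : ℕ | 1 ≤ k ∧ IsPrincipalUnitSub A L (divPowZ A L M (k : ℤ))}

/-- `M ⊆ L` represents a choice of canonical divisor `K_X` on `X = Spec A`: a
generalized divisor, Cartier in codimension one, whose divisorial ideal is a canonical
module of `A`. -/
def IsCanonicalDivisorIdeal (A : Type u) [CommRing A] (L : Type u) [CommRing L]
    [Algebra A L] (M : Submodule A L) : Prop :=
  IsGenDivisorIdeal A L M ∧ IsCanonicalModule A M

/-- The cyclic cover `A_D = ⊕_{i=0}^{N-1} A(-iD) t^{-i}` of `A` corresponding to a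
torsion divisor `D` of index `N` with `A(ND) = A·u`, realized as the `A`-subalgebra of
`L[T]/(T^N - u⁻¹)` generated by the pieces `A(-iD)·Tⁱ` for `0 ≤ i < N` (the root `T`
plays the role of `t^{-1}`; it satisfies `T^N = u⁻¹`, which is the defining relation
`u^{-1} t^{-N} = 1`). -/
def cyclicCoverAlg (A : Type u) [CommRing A] (L : Type u) [CommRing L] [Algebra A L]
    (M : Submodule A L) (N : ℕ) (u : Lˣ) :
    Subalgebra A (AdjoinRoot ((X : L[X]) ^ N - C ((u⁻¹ : Lˣ) : L))) :=
  Algebra.adjoin A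
    (⋃ i ∈ Finset.range N,
      (fun x : L => AdjoinRoot.of _ x * AdjoinRoot.root _ ^ i) ''
        ((divPowZ A L M (-(i : ℤ)) : Set L)))

/-! ### Q-Gorenstein rings -/

/-- `A` is `ℚ`-Gorenstein with index `m`: `A` is `(G_1)` and `(S_2)`, admits a choice of
canonical divisor, here given by a canonical ideal `J` (so `J = A(K_X)` for a canonical
divisor `K_X`), and `m` is the least positive integer such that `m K_X` is Cartier,
i.e. such that the `m`-th symbolic power `J^{(m)}` is a Cartier divisorial ideal. -/
def IsQGorensteinOfIndex (A : Type u) [CommRing A] (m : ℕ) : Prop :=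
  IsG1 A ∧ IsS2Ring A ∧ ∃ J : Ideal A, IsCanonicalIdeal A J ∧ 1 ≤ m ∧
    IsCartierIdeal A (J.symPow m) ∧
    m = sInf {k : ℕ | 1 ≤ k ∧ IsCartierIdeal A (J.symPow k)}

/-- `A` is `ℚ`-Gorenstein: `(G_1)`, `(S_2)`, and some positive multiple of a canonical
divisor is Cartier. -/
def IsQGorenstein (A : Type u) [CommRing A] : Prop :=
  ∃ m : ℕ, IsQGorensteinOfIndex A m

/-! ### Excellent local rings -/

/-- A Noetherian algebra over a field `k` is geometrically regular if, after base change
to any finite field extension of `k`, all localizations at primes are regular local. -/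
def IsGeometricallyRegular (k : Type u) [Field k] (B : Type u) [CommRing B]
    [Algebra k B] : Prop :=
  ∀ (k' : Type u) [Field k'] [Algebra k k'], Module.Finite k k' →
    ∀ (P : Ideal (B ⊗[k] k')) [P.IsPrime], IsRegularLocalRingDef (Localization.AtPrime P)

/-- An excellent local ring: a Noetherian local ring which is universally catenary and
whose formal fibers (the fibers of `A → Â` over the primes of `A`, where `Â` is the
completion at the maximal ideal) are geometrically regular. -/
def IsExcellentLocalRing (A : Type u) [CommRing A] : Prop :=
  IsNoetherianRing A ∧ (∀ n : ℕ, IsCatenary (MvPolynomial (Fin n) A)) ∧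
  ∃ hloc : IsLocalRing A,
    ∀ (p : Ideal A) [p.IsPrime],
      letI := hloc
      IsGeometricallyRegular (FractionRing (A ⧸ p))
        ((AdicCompletion (IsLocalRing.maximalIdeal A) A) ⊗[A] (FractionRing (A ⧸ p)))

end

/-!
Write `q = p ^ e` and `R(qD) = R v` with `v` a unit of the total quotient ring `L`. Since `x ^ q`
lies in `R(qD)` for `x ∈ R(D)`, the map `x ↦ x ^ q / v` embeds `R(D)` into `F^e_* R`.
`F`-purity and `F`-finiteness give a Frobenius splitting `φ : F^e_* R → R` (a pure map from `R` to a
finitely presented module splits), and `φ` extends to `L`. Then `r ↦ φ (r v)` maps `F^e_* R` into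
`R(D)`: `R(D)` is reflexive and `z ^ q v ∈ R` for `z ∈ R(-D)`, so `φ (r v) z = φ (r v z ^ q) ∈ R`.
It is a left inverse of the embedding because `φ (x ^ q) = x φ 1 = x`.
-/

theorem Matrix.sum_single_tmul_col {R ι κ : Type*} [CommRing R] [Fintype ι] [Fintype κ]
    [DecidableEq ι] [DecidableEq κ] (W : Matrix κ ι R) :
    ∑ j, (Pi.single j 1 : ι → R) ⊗ₜ[R] W.col j = ∑ o, W o ⊗ₜ[R] (Pi.single o 1 : κ → R) := by
  calc ∑ j, (Pi.single j 1 : ι → R) ⊗ₜ[R] W.col j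
      = ∑ j, ∑ o, W o j • ((Pi.single j 1 : ι → R) ⊗ₜ[R] (Pi.single o 1 : κ → R)) := by
        refine Finset.sum_congr rfl fun j _ => ?_
        rw [pi_eq_sum_univ' (W.col j), tmul_sum]
        simp_rw [tmul_smul, Matrix.col_apply]
    _ = ∑ o, ∑ j, W o j • ((Pi.single j 1 : ι → R) ⊗ₜ[R] (Pi.single o 1 : κ → R)) :=
        Finset.sum_comm
    _ = ∑ o, W o ⊗ₜ[R] (Pi.single o 1 : κ → R) := by
        refine Finset.sum_congr rfl fun o _ => ?_
        conv_rhs => rw [pi_eq_sum_univ' (W o), sum_tmul]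
        simp_rw [smul_tmul']

theorem LinearMap.exists_map_eq_one_of_isPureLMap {R N : Type u} [CommRing R] [AddCommGroup N]
    [Module R N] [Module.FinitePresentation R N] (f : R →ₗ[R] N) (hf : f.IsPureLMap) :
    ∃ φ : N →ₗ[R] R, φ (f 1) = 1 := by
  classical
  -- `W` is the transposed relation matrix of `N` with the coordinates `c` of `f 1` as an extra
  -- row. Purity of `f` tested on `coker W` says that `W y = Pi.single none 1` is solvable, and
  -- such a `y` is a functional on `N` taking the value `1` at `f 1`.
  obtain ⟨n, m, π, g, hπ, hexact⟩ := Module.FinitePresentation.exists_fin' R N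
  obtain ⟨c, hc⟩ := hπ (f 1)
  let W : Matrix (Option (Fin m)) (Fin n) R := fun o => o.elim c fun i => g (Pi.single i 1)
  let T := LinearMap.range W.mulVecLin
  have hsolve : Pi.single none 1 ∈ T := by
    have hzero : f 1 ⊗ₜ[R] T.mkQ (Pi.single none 1) = 0 := by
      have hcol : ∀ j, T.mkQ (W.col j) = 0 := fun j =>
        (Submodule.Quotient.mk_eq_zero T).mpr ⟨Pi.single j 1, W.mulVec_single_one j⟩
      have hrel : ∀ i, π (W (some i)) = 0 := fun i => hexact.apply_apply_eq_zero _
      have h := congrArg (TensorProduct.map π T.mkQ) W.sum_single_tmul_col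
      simp only [map_sum, map_add, TensorProduct.map_tmul, Fintype.sum_option, hcol, hrel,
        tmul_zero, zero_tmul, Finset.sum_const_zero, add_zero] at h
      rw [← hc]
      exact h.symm
    have h1 : T.mkQ (Pi.single none 1) = 0 := by
      have h2 : (1 : R) ⊗ₜ[R] T.mkQ (Pi.single none 1) = 0 :=
        hf _ (by rw [LinearMap.rTensor_tmul, hzero, map_zero])
      simpa using congrArg (TensorProduct.lid R _) h2
    simpa [T] using h1
  obtain ⟨y, hy⟩ := hsolve
  let ψ := Fintype.linearCombination R y
  have hψ : ∀ o, ψ (W o) = (Pi.single none 1 : Option (Fin m) → R) o := fun o => by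
    rw [← hy]
    simp [ψ, Fintype.linearCombination_apply, Matrix.mulVec, dotProduct]
  have hψg : ψ ∘ₗ g = 0 :=
    LinearMap.pi_ext' fun i => LinearMap.ext_ring (by simpa [W] using hψ (some i))
  refine ⟨(LinearMap.range g).liftQ ψ (LinearMap.range_le_ker_iff.mpr hψg) ∘ₗ
    (hexact.linearEquivOfSurjective hπ).symm.toLinearMap, ?_⟩
  rw [← hc]
  simpa [W] using hψ none

theorem RingHom.IsPureHom.exists_retraction {R S : Type u} [CommRing R] [CommRing S]
    [IsNoetherianRing R] {f : R →+* S} (hf : f.IsPureHom) (hfin : f.Finite) :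
    ∃ φ : S →+ R, (∀ r x, φ (f r * x) = r * φ x) ∧ φ 1 = 1 := by
  let := f.toAlgebra
  have : Module.Finite R S := hfin
  have := Module.finitePresentation_of_finite R S
  obtain ⟨φ, hφ⟩ := (Algebra.linearMap R S).exists_map_eq_one_of_isPureLMap hf
  exact ⟨φ.toAddMonoidHom, φ.map_smul, by simpa using hφ⟩

structure IsFrobeniusSplitting {R : Type*} [CommRing R] (q : ℕ) (φ : R →+ R) : Prop where
  map_pow_mul : ∀ r x, φ (r ^ q * x) = r * φ x
  map_one : φ 1 = 1

theorem IsFrobeniusSplitting.comp {R : Type*} [CommRing R] {q q' : ℕ} {φ φ' : R →+ R}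
    (hφ : IsFrobeniusSplitting q φ) (hφ' : IsFrobeniusSplitting q' φ') :
    IsFrobeniusSplitting (q * q') (φ.comp φ') where
  map_pow_mul r x := by
    simp only [AddMonoidHom.comp_apply, pow_mul, hφ'.map_pow_mul, hφ.map_pow_mul]
  map_one := by simp only [AddMonoidHom.comp_apply, hφ'.map_one, hφ.map_one]

theorem exists_isFrobeniusSplitting (R : Type u) [CommRing R] [IsNoetherianRing R] (p : ℕ)
    [ExpChar R p] (hFP : IsFPure R p) (hFF : IsFFinite R p) (e : ℕ) :
    ∃ φ : R →+ R, IsFrobeniusSplitting (p ^ e) φ := by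
  induction e with
  | zero => exact ⟨AddMonoidHom.id R, fun r x => by simp, rfl⟩
  | succ e ih =>
    have hfin := hFF 1
    rw [iterateFrobenius_one] at hfin
    obtain ⟨φ₁, hφ₁, hφ₁_one⟩ := RingHom.IsPureHom.exists_retraction hFP hfin
    obtain ⟨φ, hφ⟩ := ih
    refine ⟨φ.comp φ₁, pow_succ p e ▸ hφ.comp ⟨fun r x => ?_, hφ₁_one⟩⟩
    rw [← hφ₁, frobenius_def]

section FractionRing

open scoped nonZeroDivisors

variable {R : Type*} (L : Type*) [CommRing R] [CommRing L] [Algebra R L] [IsFractionRing R L]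

theorem IsFractionRing.exists_mul_pow_eq_algebraMap {q : ℕ} (hq : 0 < q) (w : L) :
    ∃ (t : R⁰) (b : R), w * algebraMap R L t ^ q = algebraMap R L b := by
  obtain ⟨⟨a, s⟩, hs⟩ : ∃ x : R × R⁰, w * algebraMap R L x.2 = algebraMap R L x.1 :=
    ⟨_, IsLocalization.sec_spec R⁰ w⟩
  refine ⟨s, a * s ^ (q - 1), ?_⟩
  rw [← pow_sub_one_mul hq.ne', map_mul, map_pow, ← hs]
  ring

/-- `w ↦ φ (w t ^ q) / t` for any `t ∈ R⁰` with `w t ^ q ∈ R`; this does not depend on `t` when `φ`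
is `q`-semilinear (`extendToFractions_mul_eq`). -/
noncomputable def extendToFractions (q : ℕ) (φ : R →+ R) (w : L) : L :=
  let x := IsLocalization.sec R⁰ w
  IsLocalization.mk' L (φ (x.1 * x.2 ^ (q - 1))) x.2

variable {L} {q : ℕ} {φ : R →+ R}

theorem extendToFractions_mul_eq (hφ : ∀ r x, φ (r ^ q * x) = r * φ x) (hq : 0 < q)
    {w : L} {t : R⁰} {b : R} (h : w * algebraMap R L t ^ q = algebraMap R L b) :
    extendToFractions L q φ w * algebraMap R L t = algebraMap R L (φ b) := by
  set a := (IsLocalization.sec R⁰ w).1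
  set s := (IsLocalization.sec R⁰ w).2
  have hs : w * algebraMap R L s = algebraMap R L a := IsLocalization.sec_spec R⁰ w
  have hR : (t : R) ^ q * (a * s ^ (q - 1)) = (s : R) ^ q * b := by
    apply IsFractionRing.injective R L
    rw [← pow_sub_one_mul hq.ne' (s : R)]
    simp only [map_mul, map_pow, ← hs, ← h]
    ring
  have hφR : (t : R) * φ (a * s ^ (q - 1)) = s * φ b := by
    rw [← hφ, hR, hφ]
  apply (IsLocalization.map_units L s).mul_left_cancel
  calc algebraMap R L s * (extendToFractions L q φ w * algebraMap R L t)
      = algebraMap R L t * (extendToFractions L q φ w * algebraMap R L s) := by ring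
    _ = algebraMap R L s * algebraMap R L (φ b) := by
      rw [extendToFractions, IsLocalization.mk'_spec, ← map_mul, hφR, map_mul]

theorem extendToFractions_algebraMap (hφ : ∀ r x, φ (r ^ q * x) = r * φ x) (hq : 0 < q) (b : R) :
    extendToFractions L q φ (algebraMap R L b) = algebraMap R L (φ b) := by
  simpa using extendToFractions_mul_eq hφ hq (w := algebraMap R L b) (t := 1) (by simp)

theorem extendToFractions_add (hφ : ∀ r x, φ (r ^ q * x) = r * φ x) (hq : 0 < q) (w w' : L) :
    extendToFractions L q φ (w + w') =
      extendToFractions L q φ w + extendToFractions L q φ w' := by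
  obtain ⟨t, b, h⟩ := IsFractionRing.exists_mul_pow_eq_algebraMap (R := R) L hq w
  obtain ⟨t', b', h'⟩ := IsFractionRing.exists_mul_pow_eq_algebraMap (R := R) L hq w'
  have hsum : (w + w') * algebraMap R L (t * t' : R⁰) ^ q =
      algebraMap R L ((t' : R) ^ q * b + (t : R) ^ q * b') := by
    simp only [Submonoid.coe_mul, map_mul, map_add, map_pow, ← h, ← h']
    ring
  apply (IsLocalization.map_units L (t * t')).mul_right_cancel
  rw [extendToFractions_mul_eq hφ hq hsum, map_add, hφ, hφ, Submonoid.coe_mul, map_mul, map_add,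
    map_mul, map_mul, ← extendToFractions_mul_eq hφ hq h, ← extendToFractions_mul_eq hφ hq h']
  ring

theorem extendToFractions_pow_mul (hφ : ∀ r x, φ (r ^ q * x) = r * φ x) (hq : 0 < q) (z w : L) :
    extendToFractions L q φ (z ^ q * w) = z * extendToFractions L q φ w := by
  obtain ⟨s, a, hz⟩ := IsFractionRing.exists_mul_pow_eq_algebraMap (R := R) L one_pos z
  rw [pow_one] at hz
  obtain ⟨t, b, hw⟩ := IsFractionRing.exists_mul_pow_eq_algebraMap (R := R) L hq w
  have hprod : z ^ q * w * algebraMap R L (s * t : R⁰) ^ q = algebraMap R L (a ^ q * b) := by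
    simp only [Submonoid.coe_mul, map_mul, map_pow, ← hz, ← hw]
    ring
  apply (IsLocalization.map_units L (s * t)).mul_right_cancel
  rw [extendToFractions_mul_eq hφ hq hprod, hφ, Submonoid.coe_mul, map_mul, map_mul,
    ← extendToFractions_mul_eq hφ hq hw, ← hz]
  ring

end FractionRing

section Divisor

variable {R L : Type u} [CommRing R] [CommRing L] [Algebra R L]

theorem divDual_eq_one_div (M : Submodule R L) : divDual R L M = 1 / M := rfl

theorem le_divHull (M : Submodule R L) : M ≤ divHull R L M := fun x hx z hz => by
  rw [mul_comm]
  exact hz x hx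

theorem pow_mem_divDual_pow {M : Submodule R L} {z : L} (hz : z ∈ divDual R L M) (n : ℕ) :
    z ^ n ∈ divDual R L (M ^ n) := by
  rw [divDual_eq_one_div] at hz ⊢
  have h : (1 / M) ^ n * M ^ n ≤ 1 := by
    rw [← mul_pow, mul_comm]
    exact Right.pow_le_one_of_le Submodule.mul_one_div_le_one
  exact Submodule.le_div_iff_mul_le.mpr h (Submodule.pow_mem_pow _ hz n)

variable [IsFractionRing R L] (p : ℕ) [ExpChar R p] (e : ℕ) {M : Submodule R L} {v : L}

theorem exists_linearMap_fpush_mul_eq_pow (hv : IsUnit v)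
    (hMv : M ^ p ^ e ≤ Submodule.span R {v}) :
    ∃ ι : M →ₗ[R] FPush p e R, ∀ x : M, algebraMap R L (ι x) * v = (x : L) ^ p ^ e := by
  have : ExpChar L p := expChar_of_injective_algebraMap (IsFractionRing.injective R L) p
  have hmem (x : M) : ∃ r : R, algebraMap R L r * v = (x : L) ^ p ^ e := by
    obtain ⟨r, hr⟩ := Submodule.mem_span_singleton.mp (hMv (Submodule.pow_mem_pow M x.2 _))
    exact ⟨r, by rw [← hr, Algebra.smul_def]⟩
  choose ι hι using hmem
  have huniq {r r' : R} (h : algebraMap R L r * v = algebraMap R L r' * v) : r = r' :=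
    IsFractionRing.injective R L (hv.mul_right_cancel h)
  refine ⟨{ toFun := fun x => toFPush p e (ι x)
            map_add' := fun x y => show ι (x + y) = ι x + ι y from huniq ?_
            map_smul' := fun r x =>
              show ι (r • x) = iterateFrobenius R p e r * ι x from huniq ?_ }, hι⟩
  · rw [map_add, add_mul, hι, hι, hι, Submodule.coe_add, add_pow_expChar_pow]
  · rw [map_mul, mul_assoc, hι, hι, iterateFrobenius_def, Submodule.coe_smul, Algebra.smul_def,
      mul_pow, map_pow]

theorem exists_linearMap_fpush_eq_extendToFractions (hM : divHull R L M = M)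
    (hvM : v ∈ divHull R L (M ^ p ^ e)) {φ : R →+ R}
    (hφ : ∀ r x, φ (r ^ p ^ e * x) = r * φ x) :
    ∃ π : FPush p e R →ₗ[R] M, ∀ r : R,
      (π (toFPush p e r) : L) = extendToFractions L (p ^ e) φ (algebraMap R L r * v) := by
  have hq := expChar_pow_pos R p e
  have hmem (r : R) : extendToFractions L (p ^ e) φ (algebraMap R L r * v) ∈ M := by
    rw [← hM]
    intro z hz
    obtain ⟨d, hd⟩ := Submodule.mem_one.mp (hvM _ (pow_mem_divDual_pow hz (p ^ e)))
    rw [mul_comm, ← extendToFractions_pow_mul hφ hq, mul_left_comm, mul_comm (z ^ p ^ e), ← hd,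
      ← map_mul, extendToFractions_algebraMap hφ hq]
    exact Submodule.algebraMap_mem _
  refine ⟨{ toFun := fun (r : R) => ⟨_, hmem r⟩
            map_add' := fun (x y : R) => Subtype.ext ?_
            map_smul' := fun r (x : R) => Subtype.ext ?_ }, fun r => rfl⟩
  · change extendToFractions L (p ^ e) φ (algebraMap R L (x + y) * v) =
      extendToFractions L (p ^ e) φ (algebraMap R L x * v) +
        extendToFractions L (p ^ e) φ (algebraMap R L y * v)
    rw [map_add, add_mul, extendToFractions_add hφ hq]
  · change extendToFractions L (p ^ e) φ (algebraMap R L (iterateFrobenius R p e r * x) * v) = _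
    rw [iterateFrobenius_def, map_mul, map_pow, mul_assoc, extendToFractions_pow_mul hφ hq,
      RingHom.id_apply, Submodule.coe_smul, Algebra.smul_def]

theorem isDirectSummandOf_fpush_of_divHull_pow_eq_span (hM : divHull R L M = M) (hv : IsUnit v)
    (hMv : divHull R L (M ^ p ^ e) = Submodule.span R {v}) {φ : R →+ R}
    (hφ : IsFrobeniusSplitting (p ^ e) φ) : IsDirectSummandOf R M (FPush p e R) := by
  have hq := expChar_pow_pos R p e
  obtain ⟨ι, hι⟩ := exists_linearMap_fpush_mul_eq_pow p e hv (hMv ▸ le_divHull _)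
  obtain ⟨π, hπ⟩ := exists_linearMap_fpush_eq_extendToFractions p e hM
    (hMv ▸ Submodule.mem_span_singleton_self v) hφ.map_pow_mul
  refine ⟨ι, π, LinearMap.ext fun x => Subtype.ext ?_⟩
  calc (π (ι x) : L) = extendToFractions L (p ^ e) φ ((x : L) ^ p ^ e * 1) := by
        rw [mul_one, ← hι]
        exact hπ (ι x)
    _ = x := by
        rw [extendToFractions_pow_mul hφ.map_pow_mul hq, ← map_one (algebraMap R L),
          extendToFractions_algebraMap hφ.map_pow_mul hq, hφ.map_one, map_one, mul_one]

end Divisor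

theorem p_torsion_divisor_direct_summand_general
    (R : Type u) [CommRing R] [IsNoetherianRing R]
    (p : ℕ) [Fact p.Prime] [CharP R p]
    (hFF : IsFFinite R p) (hFP : IsFPure R p)
    (e : ℕ)
    (M : Submodule R (FractionRing R))
    (hM : IsGenDivisorIdeal R (FractionRing R) M)
    (hPU : IsPrincipalUnitSub R (FractionRing R)
      (divPowZ R (FractionRing R) M ((p ^ e : ℕ) : ℤ))) :
    IsDirectSummandOf R (↥M) (FPush p e R) := by
  obtain ⟨v, hv, hMv⟩ := hPU
  obtain ⟨φ, hφ⟩ := exists_isFrobeniusSplitting R p hFP hFF e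
  exact isDirectSummandOf_fpush_of_divHull_pow_eq_span p e hM.reflexive hv hMv hφ

/-- Lemma 3.3: in a local `(G_1)`, `(S_2)`, `F`-finite, `F`-pure ring
of prime characteristic `p > 0`, the divisorial ideal `R(D)` of a torsion divisor `D`
of index `p^e` (Cartier in codimension one) is a direct summand of `F^e_* R`. -/
theorem p_torsion_divisor_direct_summand
    (R : Type u) [CommRing R] [IsNoetherianRing R] [IsLocalRing R]
    (p : ℕ) [Fact p.Prime] [CharP R p]
    (hG1 : IsG1 R) (hS2 : IsS2Ring R)
    (hFF : IsFFinite R p) (hFP : IsFPure R p)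
    (e : ℕ)
    (M : Submodule R (FractionRing R))
    (hM : IsGenDivisorIdeal R (FractionRing R) M)
    (hPU : IsPrincipalUnitSub R (FractionRing R)
      (divPowZ R (FractionRing R) M ((p ^ e : ℕ) : ℤ)))
    (hidx : divisorIndex R (FractionRing R) M = p ^ e) :
    IsDirectSummandOf R (↥M) (FPush p e R) :=
  p_torsion_divisor_direct_summand_general R p hFF hFP e M hM hPU
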